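/- arXiv:2309.00546 — 2 statements merged into one kernel-verified Lean document; each statement's English description precedes it below -/
import Mathlib

section
/- Let n be even and let P be a bichromatic convex point set with n red and n blue points whose coloring is alternating. Then P admits a straight-line bichromatic perfect matching with exactly n(n−2)/2 crossings; in particular, the matching that pairs p_i with p_{i+n+1} for even i with 0 ≤ i ≤ n−1 and pairs p_i with p_{i+n−1} for odd i with 0 ≤ i ≤ n−1 is such a matching. -/
open Finset

/-- Two closed-segment edges cross: their open segments (relative interiors) intersect. -/
def SegCross (a b c d : ℝ × ℝ) : Prop :=
  ∃ x : ℝ × ℝ, x ∈ openSegment ℝ a b ∧ x ∈ openSegment ℝ c d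

/-- `f` is a straight-line bichromatic perfect matching on points indexed by `Fin m`
with coloring `c` (`true` = red, `false` = blue): it is a fixed-point-free involution
matching points of different colors. -/
def IsBPM (m : ℕ) (c : Fin m → Bool) (f : Fin m → Fin m) : Prop :=
  Function.Involutive f ∧ (∀ i, f i ≠ i) ∧ (∀ i, c (f i) ≠ c i)

/-- Number of crossing pairs of edges of the matching `f` on the points `p`:
each edge is represented by its smaller endpoint. -/
noncomputable def crNum (m : ℕ) (p : Fin m → ℝ × ℝ) (f : Fin m → Fin m) : ℕ :=
  Nat.card {q : Fin m × Fin m // q.1 < q.2 ∧ q.1 < f q.1 ∧ q.2 < f q.2 ∧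
    SegCross (p q.1) (p (f q.1)) (p q.2) (p (f q.2))}

/-- The points `p 0, p 1, …` are distinct and in strictly convex position,
listed in clockwise order (every triple is negatively oriented). -/
def ConvexCW (m : ℕ) (p : Fin m → ℝ × ℝ) : Prop :=
  Function.Injective p ∧
  ∀ i j k : Fin m, (i : ℕ) < (j : ℕ) → (j : ℕ) < (k : ℕ) →
    ((p j).1 - (p i).1) * ((p k).2 - (p i).2) -
      ((p j).2 - (p i).2) * ((p k).1 - (p i).1) < 0

/-- The points are distinct and in general position: no three collinear. -/
def GenPos (m : ℕ) (p : Fin m → ℝ × ℝ) : Prop :=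
  Function.Injective p ∧
  ∀ i j k : Fin m, i ≠ j → i ≠ k → j ≠ k →
    ¬ Collinear ℝ ({p i, p j, p k} : Set (ℝ × ℝ))

/-- The coloring has exactly `n` red points (hence `n` blue points among the `2n`). -/
def Bichrom (n : ℕ) (c : Fin (2 * n) → Bool) : Prop :=
  (Finset.univ.filter fun i : Fin (2 * n) => c i = true).card = n

/-- The coloring alternates along the (cyclic) convex hull order. -/
def Alternating (m : ℕ) (c : Fin m → Bool) : Prop :=
  ∀ i j : Fin m, (j : ℕ) = ((i : ℕ) + 1) % m → c j ≠ c i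

/-- The coloring is a 4-block coloring: starting at position `t` along the cyclic order,
there come `r1` red points, then `b1` blue, then `r2` red, then `b2` blue,
all four blocks nonempty. -/
def FourBlockAt (n : ℕ) (c : Fin (2 * n) → Bool) (t : Fin (2 * n))
    (r1 b1 r2 b2 : ℕ) : Prop :=
  0 < r1 ∧ 0 < b1 ∧ 0 < r2 ∧ 0 < b2 ∧
  r1 + b1 + r2 + b2 = 2 * n ∧ r1 + r2 = n ∧
  ∀ j : Fin (2 * n), c (t + j) =
    if (j : ℕ) < r1 then true
    else if (j : ℕ) < r1 + b1 then false
    else if (j : ℕ) < r1 + b1 + r2 then true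
    else false

/-- The coloring is a 4-block coloring (for some start and block sizes). -/
def FourBlock (n : ℕ) (c : Fin (2 * n) → Bool) : Prop :=
  ∃ t r1 b1 r2 b2, FourBlockAt n c t r1 b1 r2 b2

/-- The coloring is a balanced 4-block coloring: any two block sizes differ by at most 1. -/
def Balanced4 (n : ℕ) (c : Fin (2 * n) → Bool) : Prop :=
  ∃ t r1 b1 r2 b2, FourBlockAt n c t r1 b1 r2 b2 ∧
    ∀ x ∈ [r1, b1, r2, b2], ∀ y ∈ [r1, b1, r2, b2], x ≤ y + 1

/-- The value `3n²/8 − n/2 + c` with `c` depending on `n mod 4`. -/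
def maxCrBound (n : ℕ) : ℚ :=
  3 * (n : ℚ) ^ 2 / 8 - (n : ℚ) / 2 +
    (if n % 4 = 0 then 0 else if n % 4 = 2 then -(1 / 2 : ℚ) else 1 / 8)

/-- `i` and `j` lie in the same monochromatic block: there is a cyclic arc from `i` to
`j` consisting of points of the color of `i`. -/
def SameBlockArc (m : ℕ) (c : Fin m → Bool) (i j : Fin m) : Prop :=
  ∃ d : Fin m, j = i + d ∧ ∀ e : Fin m, e ≤ d → c (i + e) = c i

/-!
For points in convex position, two chords with four distinct endpoints cross exactly when their
endpoints interleave along the hull; this is read off from signs of orientation determinants.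
The matching sends `l < n` to `n + σ l`, where `σ` swaps `2k` and `2k + 1`, so the edges at
`a < c < n` cross iff `σ a < σ c`. This fails only for the `n / 2` pairs `{2k, 2k + 1}`, leaving
`n(n-1)/2 - n/2 = n(n-2)/2` crossings. Partners have different parities, so an alternating
coloring makes the matching bichromatic.
-/

def orient (a b x : ℝ × ℝ) : ℝ :=
  (b.1 - a.1) * (x.2 - a.2) - (b.2 - a.2) * (x.1 - a.1)

lemma orient_add_smul (a b x y : ℝ × ℝ) {u v : ℝ} (huv : u + v = 1) :
    orient a b (u • x + v • y) = u * orient a b x + v * orient a b y := by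
  obtain rfl : v = 1 - u := by linarith
  simp only [orient, Prod.fst_add, Prod.snd_add, Prod.smul_fst, Prod.smul_snd, smul_eq_mul]
  ring

lemma orient_eq_zero_of_mem_openSegment {a b x : ℝ × ℝ} (hx : x ∈ openSegment ℝ a b) :
    orient a b x = 0 := by
  obtain ⟨u, v, -, -, huv, rfl⟩ := hx
  rw [orient_add_smul a b a b huv]
  simp only [orient]
  ring

lemma not_segCross_of_orient_mul_pos {a b c d : ℝ × ℝ} (h : 0 < orient a b c * orient a b d) :
    ¬ SegCross a b c d := by
  rintro ⟨x, hab, u, v, hu, hv, huv, rfl⟩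
  have h0 := orient_eq_zero_of_mem_openSegment hab
  rw [orient_add_smul a b c d huv] at h0
  rcases mul_pos_iff.mp h with ⟨hc, hd⟩ | ⟨hc, hd⟩ <;> nlinarith

lemma sub_ne_zero_of_mul_neg {s t : ℝ} (h : s * t < 0) : s - t ≠ 0 :=
  sub_ne_zero.mpr fun e => by subst e; nlinarith [mul_self_nonneg s]

lemma smul_sub_mem_openSegment {s t : ℝ} (h : s * t < 0) (x y : ℝ × ℝ) :
    (s - t)⁻¹ • (s • y - t • x) ∈ openSegment ℝ x y := by
  have := sub_ne_zero_of_mul_neg h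
  refine ⟨-t / (s - t), s / (s - t), ?_, ?_, by field_simp; ring, by module⟩ <;>
    rcases mul_neg_iff.mp h with ⟨hs, ht⟩ | ⟨hs, ht⟩
  all_goals first
    | exact div_pos (by linarith) (by linarith)
    | exact div_pos_of_neg_of_neg (by linarith) (by linarith)

lemma segCross_of_orient_mul_neg {a b c d : ℝ × ℝ}
    (hab : orient a b c * orient a b d < 0) (hcd : orient c d a * orient c d b < 0) :
    SegCross a b c d := by
  refine ⟨_, smul_sub_mem_openSegment hcd a b, ?_⟩
  convert smul_sub_mem_openSegment hab c d using 1
  have h1 := sub_ne_zero_of_mul_neg hab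
  have h2 := sub_ne_zero_of_mul_neg hcd
  ext <;>
    simp only [orient, Prod.smul_fst, Prod.smul_snd, Prod.fst_sub, Prod.snd_sub, smul_eq_mul]
      at h1 h2 ⊢ <;>
    field_simp <;> ring

namespace ConvexCW

variable {m : ℕ} {p : Fin m → ℝ × ℝ}

lemma orient_pos_of_between (hp : ConvexCW m p) {i j k : Fin m} (hik : i < k) (hkj : k < j) :
    0 < orient (p i) (p j) (p k) := by
  have := hp.2 i k j hik hkj
  simp only [orient] at this ⊢
  linarith

lemma orient_neg_of_gt (hp : ConvexCW m p) {i j k : Fin m} (hij : i < j) (hjk : j < k) :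
    orient (p i) (p j) (p k) < 0 :=
  hp.2 i j k hij hjk

lemma orient_neg_of_lt (hp : ConvexCW m p) {i j k : Fin m} (hki : k < i) (hij : i < j) :
    orient (p i) (p j) (p k) < 0 := by
  have := hp.2 k i j hki hij
  simp only [orient] at this ⊢
  linarith

theorem segCross_iff (hp : ConvexCW m p) {a b c d : Fin m} (hab : a < b) (hcd : c < d)
    (hac : a < c) (hbc : b ≠ c) (hbd : b ≠ d) :
    SegCross (p a) (p b) (p c) (p d) ↔ c < b ∧ b < d := by
  constructor
  · intro h
    rcases lt_or_gt_of_ne hbc with hbc | hcb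
    · exact absurd h <| not_segCross_of_orient_mul_pos <|
        mul_pos_of_neg_of_neg (hp.orient_neg_of_gt hab hbc)
          (hp.orient_neg_of_gt hab (hbc.trans hcd))
    · refine ⟨hcb, lt_of_not_ge fun hdb => ?_⟩
      exact not_segCross_of_orient_mul_pos (mul_pos (hp.orient_pos_of_between hac hcb)
        (hp.orient_pos_of_between (hac.trans hcd) (lt_of_le_of_ne hdb hbd.symm))) h
  · rintro ⟨hcb, hbd⟩
    exact segCross_of_orient_mul_neg
      (mul_neg_of_pos_of_neg (hp.orient_pos_of_between hac hcb) (hp.orient_neg_of_gt hab hbd))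
      (mul_neg_of_neg_of_pos (hp.orient_neg_of_lt hac hcd) (hp.orient_pos_of_between hcb hbd))

end ConvexCW

def pairSwap (k : ℕ) : ℕ := if Even k then k + 1 else k - 1

def antipodalSwap (n k : ℕ) : ℕ := if k < n then n + pairSwap k else pairSwap (k - n)

section
variable {n k : ℕ}

lemma antipodalSwap_eq : antipodalSwap n k =
    if k < n then (if Even k then k + n + 1 else k + n - 1)
    else (if Even (k - n) then k - n + 1 else k - n - 1) := by
  simp only [antipodalSwap, pairSwap, Nat.even_iff]
  split_ifs <;> omega

lemma antipodalSwap_lt (hn : Even n) (hk : k < 2 * n) : antipodalSwap n k < 2 * n := by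
  rw [Nat.even_iff] at hn
  simp only [antipodalSwap, pairSwap, Nat.even_iff]
  split_ifs <;> omega

lemma antipodalSwap_antipodalSwap (hn : Even n) (hk : k < 2 * n) :
    antipodalSwap n (antipodalSwap n k) = k := by
  rw [Nat.even_iff] at hn
  simp only [antipodalSwap, pairSwap, Nat.even_iff]
  split_ifs <;> omega

lemma antipodalSwap_mod_two_ne (hn : Even n) : antipodalSwap n k % 2 ≠ k % 2 := by
  rw [Nat.even_iff] at hn
  simp only [antipodalSwap, pairSwap, Nat.even_iff]
  split_ifs <;> omega

lemma lt_antipodalSwap_iff (hn : Even n) (hk : k < 2 * n) : k < antipodalSwap n k ↔ k < n := by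
  rw [Nat.even_iff] at hn
  simp only [antipodalSwap, pairSwap, Nat.even_iff]
  split_ifs <;> omega

end

lemma filter_pairSwap_lt (c : ℕ) :
    (range c).filter (fun a => pairSwap a < pairSwap c) = range (c - c % 2) := by
  ext a
  simp only [mem_filter, mem_range, pairSwap, Nat.even_iff]
  split_ifs <;> omega

lemma sum_range_sub_mod_two {n : ℕ} (hn : Even n) :
    ∑ c ∈ range n, (c - c % 2) = n * (n - 2) / 2 := by
  obtain ⟨m, rfl⟩ := hn
  induction m with
  | zero => rfl
  | succ m ih =>
    have hsq : (m + m + 1 + 1) * (m + m + 1 + 1 - 2) = (m + m) * (m + m - 2) + 8 * m := by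
      rcases m with _ | m
      · rfl
      · rw [show m + 1 + (m + 1) + 1 + 1 - 2 = m + 1 + (m + 1) by omega,
          show m + 1 + (m + 1) - 2 = m + m by omega]
        ring
    rw [show m + 1 + (m + 1) = m + m + 1 + 1 by ring, sum_range_succ, sum_range_succ, ih]
    omega

lemma card_pairs_pairSwap_lt {m n : ℕ} (hn : Even n) (hnm : n ≤ m) :
    #(univ.filter fun q : Fin m × Fin m =>
      (q.1 : ℕ) < q.2 ∧ (q.2 : ℕ) < n ∧ pairSwap q.1 < pairSwap q.2) = n * (n - 2) / 2 := by
  calc _ = #((range n).sigma fun c => (range c).filter fun a => pairSwap a < pairSwap c) := by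
        refine card_bij (fun q _ => ⟨q.2, q.1⟩) ?_ ?_ ?_
        · intro q hq
          simp only [mem_filter, mem_univ, true_and] at hq
          simp only [mem_sigma, mem_range, mem_filter]
          exact ⟨hq.2.1, hq.1, hq.2.2⟩
        · intro q _ q' _ h
          simp only [Sigma.mk.injEq, heq_eq_eq] at h
          exact Prod.ext (Fin.ext h.2) (Fin.ext h.1)
        · rintro ⟨c, a⟩ h
          simp only [mem_sigma, mem_range, mem_filter] at h
          exact ⟨(⟨a, by omega⟩, ⟨c, by omega⟩), by simp [h], rfl⟩
    _ = n * (n - 2) / 2 := by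
        simp only [card_sigma, filter_pairSwap_lt, card_range]
        exact sum_range_sub_mod_two hn

lemma Alternating.apply_eq_iff {m : ℕ} {c : Fin m → Bool} (h : Alternating m c) (i : Fin m) :
    c i = c ⟨0, i.pos⟩ ↔ (i : ℕ) % 2 = 0 := by
  obtain ⟨k, hk⟩ := i
  induction k with
  | zero => simp
  | succ k ih =>
    have hstep := h ⟨k, by omega⟩ ⟨k + 1, hk⟩ (Nat.mod_eq_of_lt hk).symm
    have := ih (by omega)
    revert hstep this
    generalize c ⟨k + 1, hk⟩ = x
    generalize c ⟨k, _⟩ = y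
    generalize c ⟨0, _⟩ = z
    cases x <;> cases y <;> cases z <;> simp <;> omega

lemma Alternating.apply_ne_of_mod_two_ne {m : ℕ} {c : Fin m → Bool} (h : Alternating m c)
    {i j : Fin m} (hij : (i : ℕ) % 2 ≠ (j : ℕ) % 2) : c i ≠ c j := by
  intro hc
  have hi := h.apply_eq_iff i
  have hj := h.apply_eq_iff j
  rw [← hc] at hj
  have := hi.symm.trans hj
  omega

def antipodalMatching {n : ℕ} (hn : Even n) (l : Fin (2 * n)) : Fin (2 * n) :=
  ⟨antipodalSwap n l, antipodalSwap_lt hn l.isLt⟩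

section
variable {n : ℕ} (hn : Even n)

lemma antipodalMatching_involutive : Function.Involutive (antipodalMatching hn) :=
  fun l => Fin.ext (antipodalSwap_antipodalSwap hn l.isLt)

lemma isBPM_antipodalMatching {c : Fin (2 * n) → Bool} (hc : Alternating (2 * n) c) :
    IsBPM (2 * n) c (antipodalMatching hn) :=
  ⟨antipodalMatching_involutive hn,
    fun _ h => antipodalSwap_mod_two_ne hn (congrArg (· % 2) (congrArg Fin.val h)),
    fun _ => hc.apply_ne_of_mod_two_ne (antipodalSwap_mod_two_ne hn)⟩

lemma crNum_antipodalMatching {p : Fin (2 * n) → ℝ × ℝ} (hp : ConvexCW (2 * n) p) :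
    crNum (2 * n) p (antipodalMatching hn) = n * (n - 2) / 2 := by
  set f := antipodalMatching hn
  have hlt (l : Fin (2 * n)) : l < f l ↔ (l : ℕ) < n := lt_antipodalSwap_iff hn l.isLt
  have hval (l : Fin (2 * n)) (hl : (l : ℕ) < n) : (f l : ℕ) = n + pairSwap l := by
    simp [f, antipodalMatching, antipodalSwap, hl]
  have hcross {a c : Fin (2 * n)} (hac : a < c) (hc : (c : ℕ) < n) :
      SegCross (p a) (p (f a)) (p c) (p (f c)) ↔ pairSwap a < pairSwap c := by
    have ha : (a : ℕ) < n := lt_trans hac hc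
    have hfa_ne : f a ≠ c := fun h => by
      have := congrArg Fin.val h
      rw [hval a ha] at this
      omega
    rw [hp.segCross_iff ((hlt a).2 ha) ((hlt c).2 hc) hac hfa_ne
      ((antipodalMatching_involutive hn).injective.ne hac.ne), Fin.lt_def, Fin.lt_def,
      hval a ha, hval c hc]
    omega
  have hpairs (q : Fin (2 * n) × Fin (2 * n)) :
      (q.1 < q.2 ∧ q.1 < f q.1 ∧ q.2 < f q.2 ∧
        SegCross (p q.1) (p (f q.1)) (p q.2) (p (f q.2))) ↔
        ((q.1 : ℕ) < q.2 ∧ (q.2 : ℕ) < n ∧ pairSwap q.1 < pairSwap q.2) := by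
    constructor
    · rintro ⟨hac, -, hc, hx⟩
      exact ⟨hac, (hlt _).1 hc, (hcross hac ((hlt _).1 hc)).1 hx⟩
    · rintro ⟨hac, hc, hs⟩
      exact ⟨hac, (hlt _).2 (by omega), (hlt _).2 hc, (hcross hac hc).2 hs⟩
  rw [crNum, Nat.card_congr (Equiv.subtypeEquivRight hpairs), Nat.card_eq_fintype_card,
    Fintype.card_subtype]
  exact card_pairs_pairSwap_lt hn (by omega)

end

theorem stmt9_general (n : ℕ) (hn : Even n)
    (p : Fin (2 * n) → ℝ × ℝ) (c : Fin (2 * n) → Bool)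
    (hconv : ConvexCW (2 * n) p) (halt : Alternating (2 * n) c) :
    ∃ f : Fin (2 * n) → Fin (2 * n),
      (∀ l : Fin (2 * n), (f l : ℕ) =
        if (l : ℕ) < n then
          (if Even (l : ℕ) then (l : ℕ) + n + 1 else (l : ℕ) + n - 1)
        else
          (if Even ((l : ℕ) - n) then (l : ℕ) - n + 1 else (l : ℕ) - n - 1)) ∧
      IsBPM (2 * n) c f ∧ crNum (2 * n) p f = n * (n - 2) / 2 :=
  ⟨antipodalMatching hn, fun _ => antipodalSwap_eq, isBPM_antipodalMatching hn halt,
    crNum_antipodalMatching hn hconv⟩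

/-- For even `n` and an alternately colored bichromatic convex point set,
the matching pairing `p i` with `p (i+n+1)` for even `i < n` and `p i` with
`p (i+n−1)` for odd `i < n` is a bichromatic perfect matching with exactly
`n(n−2)/2` crossings. -/
theorem stmt9 (n : ℕ) (hn : Even n)
    (p : Fin (2 * n) → ℝ × ℝ) (c : Fin (2 * n) → Bool)
    (hconv : ConvexCW (2 * n) p) (hcol : Bichrom n c) (halt : Alternating (2 * n) c) :
    ∃ f : Fin (2 * n) → Fin (2 * n),
      (∀ l : Fin (2 * n), (f l : ℕ) =
        if (l : ℕ) < n then
          (if Even (l : ℕ) then (l : ℕ) + n + 1 else (l : ℕ) + n - 1)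
        else
          (if Even ((l : ℕ) - n) then (l : ℕ) - n + 1 else (l : ℕ) - n - 1)) ∧
      IsBPM (2 * n) c f ∧ crNum (2 * n) p f = n * (n - 2) / 2 :=
  stmt9_general n hn p c hconv halt
end

section
/- Let n be even and let P be a bichromatic convex point set with n red and n blue points whose coloring is alternating, and let M be a straight-line bichromatic perfect matching on P. Then every edge of M crosses at most n−2 other edges of M. -/
open Finset

private def Dt (u v w : ℝ × ℝ) : ℝ :=
  (v.1 - u.1) * (w.2 - u.2) - (v.2 - u.2) * (w.1 - u.1)

private lemma dt_affine (u v x y : ℝ × ℝ) (s t : ℝ) (hst : s + t = 1) :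
    Dt u v (s • x + t • y) = s * Dt u v x + t * Dt u v y := by
  have h : s = 1 - t := by linarith
  subst h
  simp only [Dt, Prod.fst_add, Prod.snd_add, Prod.smul_fst, Prod.smul_snd, smul_eq_mul]
  ring

private lemma dt_openSegment_pos {u v x y : ℝ × ℝ} (hx : 0 < Dt u v x) (hy : 0 < Dt u v y)
    {z : ℝ × ℝ} (hz : z ∈ openSegment ℝ x y) : 0 < Dt u v z := by
  obtain ⟨s, t, hs, ht, hst, rfl⟩ := hz
  rw [dt_affine u v x y s t hst]
  have h1 := mul_pos hs hx
  have h2 := mul_pos ht hy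
  linarith

private lemma dt_self {u v z : ℝ × ℝ} (hz : z ∈ openSegment ℝ u v) : Dt u v z = 0 := by
  obtain ⟨s, t, hs, ht, hst, rfl⟩ := hz
  rw [dt_affine u v u v s t hst]
  simp only [Dt]
  ring

private lemma no_cross_pos {u v x y : ℝ × ℝ} (hx : 0 < Dt u v x) (hy : 0 < Dt u v y) :
    ¬ SegCross u v x y := by
  rintro ⟨z, hz1, hz2⟩
  have h0 : Dt u v z = 0 := dt_self hz1
  have := dt_openSegment_pos hx hy hz2
  linarith

private lemma no_cross_neg {u v x y : ℝ × ℝ} (hx : Dt u v x < 0) (hy : Dt u v y < 0) :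
    ¬ SegCross u v x y := by
  rintro ⟨z, hz1, hz2⟩
  have hz1' : z ∈ openSegment ℝ v u := by rwa [openSegment_symm]
  have hsw : ∀ a : ℝ × ℝ, Dt v u a = -Dt u v a := by
    intro a; simp only [Dt]; ring
  exact no_cross_pos (u := v) (v := u) (by rw [hsw]; linarith) (by rw [hsw]; linarith)
    ⟨z, hz1', hz2⟩

private lemma segCross_comm (a b c d : ℝ × ℝ) : SegCross a b c d ↔ SegCross b a c d := by
  unfold SegCross
  rw [openSegment_symm]

private lemma alt_parity {m : ℕ} (c : Fin m → Bool) (h : Alternating m c)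
    (h0 : 0 < m) : ∀ (k : ℕ) (hk : k < m),
    c ⟨k, hk⟩ = (if k % 2 = 0 then c ⟨0, h0⟩ else !c ⟨0, h0⟩) := by
  intro k
  induction k with
  | zero => intro hk; simp
  | succ k ih =>
    intro hk
    have hk' : k < m := by omega
    have hne : c ⟨k + 1, hk⟩ ≠ c ⟨k, hk'⟩ :=
      h ⟨k, hk'⟩ ⟨k + 1, hk⟩ (by simp [Nat.mod_eq_of_lt hk])
    have hih := ih hk'
    by_cases hk2 : k % 2 = 0
    · have h1 : (k + 1) % 2 ≠ 0 := by omega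
      rw [if_neg h1]
      rw [hih, if_pos hk2] at hne
      cases hx : c ⟨0, h0⟩ <;> cases hy : c ⟨k + 1, hk⟩ <;> simp_all
    · have h1 : (k + 1) % 2 = 0 := by omega
      rw [if_pos h1]
      rw [hih, if_neg hk2] at hne
      cases hx : c ⟨0, h0⟩ <;> cases hy : c ⟨k + 1, hk⟩ <;> simp_all

private lemma stmt10_main (n : ℕ) (hn : Even n)
    (p : Fin (2 * n) → ℝ × ℝ) (c : Fin (2 * n) → Bool)
    (hconv : ConvexCW (2 * n) p) (halt : Alternating (2 * n) c)
    (f : Fin (2 * n) → Fin (2 * n)) (hM : IsBPM (2 * n) c f)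
    (i : Fin (2 * n)) (hi : (i : ℕ) < ((f i : Fin (2 * n)) : ℕ)) :
    Nat.card {j : Fin (2 * n) // j < f j ∧ j ≠ i ∧ j ≠ f i ∧
      SegCross (p i) (p (f i)) (p j) (p (f j))} ≤ n - 2 := by
  classical
  obtain ⟨hpinj, hor⟩ := hconv
  obtain ⟨hinv, hfix, hcol2⟩ := hM
  have hm : 0 < 2 * n := lt_of_le_of_lt (Nat.zero_le _) i.isLt
  -- parity of the arc
  have hpar : (i : ℕ) % 2 ≠ ((f i : Fin (2 * n)) : ℕ) % 2 := by
    intro hpp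
    have e1 := alt_parity c halt hm (i : ℕ) i.isLt
    have e2 := alt_parity c halt hm ((f i : Fin (2 * n)) : ℕ) (f i).isLt
    have hci : c ⟨(i : ℕ), i.isLt⟩ = c i := by congr 1
    have hcf : c ⟨((f i : Fin (2 * n)) : ℕ), (f i).isLt⟩ = c (f i) := by congr 1
    rw [hci] at e1
    rw [hcf, ← hpp] at e2
    exact hcol2 i (by rw [e1, e2])
  -- sign facts
  have hApos : ∀ k : Fin (2 * n), (i : ℕ) < (k : ℕ) → (k : ℕ) < ((f i : Fin (2 * n)) : ℕ) →
      0 < Dt (p i) (p (f i)) (p k) := by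
    intro k h1 h2
    have hh := hor i k (f i) h1 h2
    have key : Dt (p i) (p (f i)) (p k) =
        -(((p k).1 - (p i).1) * ((p (f i)).2 - (p i).2) -
          ((p k).2 - (p i).2) * ((p (f i)).1 - (p i).1)) := by
      simp only [Dt]; ring
    rw [key]; linarith
  have hBneg : ∀ k : Fin (2 * n), ((k : ℕ) < (i : ℕ) ∨ ((f i : Fin (2 * n)) : ℕ) < (k : ℕ)) →
      Dt (p i) (p (f i)) (p k) < 0 := by
    intro k hk
    rcases hk with hk | hk
    · have hh := hor k i (f i) hk hi
      have key : Dt (p i) (p (f i)) (p k) =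
          ((p i).1 - (p k).1) * ((p (f i)).2 - (p k).2) -
            ((p i).2 - (p k).2) * ((p (f i)).1 - (p k).1) := by
        simp only [Dt]; ring
      rw [key]; linarith
    · have hh := hor i (f i) k hi hk
      simp only [Dt]
      linarith
  -- the two arcs
  set A : Finset (Fin (2 * n)) :=
    univ.filter (fun j => (i : ℕ) < (j : ℕ) ∧ (j : ℕ) < ((f i : Fin (2 * n)) : ℕ)) with hAdef
  set B : Finset (Fin (2 * n)) :=
    univ.filter (fun j => (j : ℕ) < (i : ℕ) ∨ ((f i : Fin (2 * n)) : ℕ) < (j : ℕ)) with hBdef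
  have hmemA : ∀ j : Fin (2 * n), j ∈ A ↔
      ((i : ℕ) < (j : ℕ) ∧ (j : ℕ) < ((f i : Fin (2 * n)) : ℕ)) := by
    intro j; rw [hAdef, mem_filter]; simp
  have hmemB : ∀ j : Fin (2 * n), j ∈ B ↔
      ((j : ℕ) < (i : ℕ) ∨ ((f i : Fin (2 * n)) : ℕ) < (j : ℕ)) := by
    intro j; rw [hBdef, mem_filter]; simp
  -- key separation fact
  have hkey : ∀ j : Fin (2 * n), j < f j → j ≠ i → j ≠ f i →
      SegCross (p i) (p (f i)) (p j) (p (f j)) →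
      ((j ∈ A ∧ f j ∈ B) ∨ (j ∈ B ∧ f j ∈ A)) := by
    intro j hj1 hj2 hj3 hcross
    have hvj : (j : ℕ) ≠ (i : ℕ) := fun h => hj2 (Fin.ext h)
    have hvj' : (j : ℕ) ≠ ((f i : Fin (2 * n)) : ℕ) := fun h => hj3 (Fin.ext h)
    have hfj : ((f j : Fin (2 * n)) : ℕ) ≠ (i : ℕ) := by
      intro h
      have h1 : f j = i := Fin.ext h
      have h2 : j = f i := by rw [← h1, hinv j]
      exact hj3 h2
    have hfj' : ((f j : Fin (2 * n)) : ℕ) ≠ ((f i : Fin (2 * n)) : ℕ) := by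
      intro h
      have h1 : f j = f i := Fin.ext h
      have h2 : j = i := by
        have := congrArg f h1
        rwa [hinv, hinv] at this
      exact hj2 h2
    have hjlt := j.isLt
    have hflt := (f j).isLt
    have hfilt := (f i).isLt
    have hjmem : j ∈ A ∨ j ∈ B := by rw [hmemA, hmemB]; omega
    have hfjmem : f j ∈ A ∨ f j ∈ B := by rw [hmemA, hmemB]; omega
    rcases hjmem with hja | hjb
    · rcases hfjmem with hfa | hfb
      · exfalso
        rw [hmemA] at hja hfa
        exact no_cross_pos (hApos j hja.1 hja.2) (hApos (f j) hfa.1 hfa.2) hcross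
      · exact Or.inl ⟨hja, hfb⟩
    · rcases hfjmem with hfa | hfb
      · exact Or.inr ⟨hjb, hfa⟩
      · exfalso
        rw [hmemB] at hjb hfb
        exact no_cross_neg (hBneg j hjb) (hBneg (f j) hfb) hcross
  -- injections
  have hinj : ∀ (T : Finset (Fin (2 * n))),
      (∀ j : Fin (2 * n), j < f j → j ≠ i → j ≠ f i →
        SegCross (p i) (p (f i)) (p j) (p (f j)) → j ∈ T ∨ f j ∈ T) →
      Nat.card {j : Fin (2 * n) // j < f j ∧ j ≠ i ∧ j ≠ f i ∧
        SegCross (p i) (p (f i)) (p j) (p (f j))} ≤ T.card := by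
    intro T hT
    have hF : ∃ F : {j : Fin (2 * n) // j < f j ∧ j ≠ i ∧ j ≠ f i ∧
        SegCross (p i) (p (f i)) (p j) (p (f j))} → {x // x ∈ T}, Function.Injective F := by
      refine ⟨fun j => if h : (j : Fin (2 * n)) ∈ T then ⟨j, h⟩ else
        ⟨f j, by
          rcases hT j.1 j.2.1 j.2.2.1 j.2.2.2.1 j.2.2.2.2 with h' | h'
          · exact absurd h' h
          · exact h'⟩, ?_⟩
      intro x y hxy
      apply Subtype.ext
      dsimp only at hxy
      split_ifs at hxy with h1 h2 h2
      · exact Subtype.mk_eq_mk.mp hxy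
      · exfalso
        have e : (x : Fin (2 * n)) = f y := Subtype.mk_eq_mk.mp hxy
        have e2 : f (x : Fin (2 * n)) = y := by rw [e, hinv]
        have l1 := x.2.1
        have l2 := y.2.1
        rw [e2] at l1
        rw [← e] at l2
        exact absurd l1 (lt_asymm l2)
      · exfalso
        have e : f (x : Fin (2 * n)) = y := Subtype.mk_eq_mk.mp hxy
        have e2 : (x : Fin (2 * n)) = f y := by rw [← e, hinv]
        have l1 := x.2.1
        have l2 := y.2.1
        rw [e] at l1
        rw [← e2] at l2
        exact absurd l1 (lt_asymm l2)
      · have e : f (x : Fin (2 * n)) = f y := Subtype.mk_eq_mk.mp hxy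
        exact hinv.injective e
    obtain ⟨F, hFinj⟩ := hF
    calc Nat.card {j : Fin (2 * n) // j < f j ∧ j ≠ i ∧ j ≠ f i ∧
        SegCross (p i) (p (f i)) (p j) (p (f j))}
        ≤ Nat.card {x // x ∈ T} := Nat.card_le_card_of_injective F hFinj
      _ = T.card := Nat.card_eq_finsetCard T
  have hSA := hinj A (fun j h1 h2 h3 h4 => by
    rcases hkey j h1 h2 h3 h4 with h | h
    · exact Or.inl h.1
    · exact Or.inr h.2)
  have hSB := hinj B (fun j h1 h2 h3 h4 => by
    rcases hkey j h1 h2 h3 h4 with h | h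
    · exact Or.inr h.2
    · exact Or.inl h.1)
  -- cardinalities
  have hAcard : A.card = ((f i : Fin (2 * n)) : ℕ) - (i : ℕ) - 1 := by
    rw [← Nat.card_Ioo]
    apply Finset.card_bij (fun (j : Fin (2 * n)) _ => (j : ℕ))
    · intro a ha
      rw [hmemA] at ha
      rw [Finset.mem_Ioo]
      exact ha
    · intro a _ b _ hab
      exact Fin.ext hab
    · intro m hm'
      rw [Finset.mem_Ioo] at hm'
      have hmlt : m < 2 * n := lt_trans hm'.2 (f i).isLt
      exact ⟨⟨m, hmlt⟩, (hmemA _).2 hm', rfl⟩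
  have hne : i ≠ f i := fun h => (by omega : (i : ℕ) ≠ ((f i : Fin (2 * n)) : ℕ))
    (congrArg Fin.val h)
  have hAB : A.card + B.card = 2 * n - 2 := by
    have hdisj : Disjoint A B := by
      rw [Finset.disjoint_left]
      intro j hja hjb
      rw [hmemA] at hja
      rw [hmemB] at hjb
      omega
    have hunion : A ∪ B = univ \ {i, f i} := by
      ext j
      rw [Finset.mem_union, hmemA, hmemB, Finset.mem_sdiff, Finset.mem_insert,
        Finset.mem_singleton]
      have hjlt := j.isLt
      have hfilt := (f i).isLt
      simp only [Finset.mem_univ, true_and, Fin.ext_iff]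
      omega
    have h2 : (A ∪ B).card = A.card + B.card := Finset.card_union_of_disjoint hdisj
    rw [hunion, Finset.card_sdiff_of_subset (Finset.subset_univ _), Finset.card_pair hne,
      Finset.card_univ, Fintype.card_fin] at h2
    omega
  obtain ⟨k, hk⟩ := hn
  have hfilt := (f i).isLt
  omega


/-- For even `n` and an alternately colored bichromatic convex point set,
every edge of a bichromatic perfect matching crosses at most `n − 2` other edges. -/
theorem stmt10 (n : ℕ) (hn : Even n)
    (p : Fin (2 * n) → ℝ × ℝ) (c : Fin (2 * n) → Bool)
    (hconv : ConvexCW (2 * n) p) (hcol : Bichrom n c) (halt : Alternating (2 * n) c)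
    (f : Fin (2 * n) → Fin (2 * n)) (hM : IsBPM (2 * n) c f) :
    ∀ i : Fin (2 * n),
      Nat.card {j : Fin (2 * n) // j < f j ∧ j ≠ i ∧ j ≠ f i ∧
        SegCross (p i) (p (f i)) (p j) (p (f j))} ≤ n - 2 := by
  intro i
  rcases lt_trichotomy ((i : ℕ)) (((f i : Fin (2 * n)) : ℕ)) with h | h | h
  · exact stmt10_main n hn p c hconv halt f hM i h
  · exact absurd (Fin.ext h.symm) (hM.2.1 i)
  · have hml := stmt10_main n hn p c hconv halt f hM (f i) (by rw [hM.1 i]; exact h)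
    have hE : {j : Fin (2 * n) // j < f j ∧ j ≠ i ∧ j ≠ f i ∧
          SegCross (p i) (p (f i)) (p j) (p (f j))} ≃
        {j : Fin (2 * n) // j < f j ∧ j ≠ f i ∧ j ≠ f (f i) ∧
          SegCross (p (f i)) (p (f (f i))) (p j) (p (f j))} := by
      apply Equiv.subtypeEquivRight
      intro j
      rw [hM.1 i, segCross_comm]
      tauto
    rw [Nat.card_congr hE]
    exact hml
end
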